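/- arXiv:2003.03248 — 3 statements merged into one kernel-verified Lean document; each statement's English description precedes it below -/
import Mathlib

section
/- Let ξ > 0 be such that D_ξ := DᵀD − ξ²I is invertible. Then the function h_ξ(λ) := det H_ξ(λ) is even: for all λ ∈ ℂ, det H_ξ(−λ) = det H_ξ(λ). -/
open Matrix Complex

noncomputable section

variable {n nu ny m : ℕ}

/-- `D_ξ = Dᵀ D − ξ² I`. -/
def Dxi (D : Matrix (Fin ny) (Fin nu) ℝ) (ξ : ℝ) : Matrix (Fin nu) (Fin nu) ℝ :=
  Dᵀ * D - ξ ^ 2 • (1 : Matrix (Fin nu) (Fin nu) ℝ)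

/-- `(Dᵀ)_ξ = D Dᵀ − ξ² I`, the matrix denoted `D_ξ^{-T}`-inverse base in the paper
(the only dimensionally consistent reading of the `(2,1)` block of `M₀`).
Note that it is invertible iff `D_ξ` is (for `ξ ≠ 0`), since `DᵀD` and `DDᵀ` have the
same nonzero eigenvalues. -/
def DxiT (D : Matrix (Fin ny) (Fin nu) ℝ) (ξ : ℝ) : Matrix (Fin ny) (Fin ny) ℝ :=
  D * Dᵀ - ξ ^ 2 • (1 : Matrix (Fin ny) (Fin ny) ℝ)

/-- The block matrix `M₀`. -/
def Mzero (A0 : Matrix (Fin n) (Fin n) ℝ) (B : Matrix (Fin n) (Fin nu) ℝ)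
    (C : Matrix (Fin ny) (Fin n) ℝ) (D : Matrix (Fin ny) (Fin nu) ℝ) (ξ : ℝ) :
    Matrix (Fin n ⊕ Fin n) (Fin n ⊕ Fin n) ℝ :=
  fromBlocks (A0 - B * (Dxi D ξ)⁻¹ * Dᵀ * C) (-(B * (Dxi D ξ)⁻¹ * Bᵀ))
    (ξ ^ 2 • (Cᵀ * (DxiT D ξ)⁻¹ * C)) (-A0ᵀ + Cᵀ * D * (Dxi D ξ)⁻¹ * Bᵀ)

/-- The block matrix `Mᵢ` for `1 ≤ i ≤ m`. -/
def Mpos (Ai : Matrix (Fin n) (Fin n) ℝ) : Matrix (Fin n ⊕ Fin n) (Fin n ⊕ Fin n) ℝ :=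
  fromBlocks Ai 0 0 0

/-- The block matrix `M₋ᵢ` for `1 ≤ i ≤ m`. -/
def Mneg (Ai : Matrix (Fin n) (Fin n) ℝ) : Matrix (Fin n ⊕ Fin n) (Fin n ⊕ Fin n) ℝ :=
  fromBlocks 0 0 0 (-Aiᵀ)

/-- `H_ξ(λ) = λI − M₀ − Σᵢ (Mᵢ e^{−λτᵢ} + M₋ᵢ e^{λτᵢ})`. -/
def Hxi (A0 : Matrix (Fin n) (Fin n) ℝ) (A : Fin m → Matrix (Fin n) (Fin n) ℝ)
    (B : Matrix (Fin n) (Fin nu) ℝ) (C : Matrix (Fin ny) (Fin n) ℝ)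
    (D : Matrix (Fin ny) (Fin nu) ℝ) (τ : Fin m → ℝ) (ξ : ℝ) (lam : ℂ) :
    Matrix (Fin n ⊕ Fin n) (Fin n ⊕ Fin n) ℂ :=
  lam • (1 : Matrix (Fin n ⊕ Fin n) (Fin n ⊕ Fin n) ℂ)
    - (Mzero A0 B C D ξ).map Complex.ofReal
    - ∑ i : Fin m, (Complex.exp (-lam * (τ i : ℂ)) • (Mpos (A i)).map Complex.ofReal
        + Complex.exp (lam * (τ i : ℂ)) • (Mneg (A i)).map Complex.ofReal)

/-- `A(λ) = λI − A₀ − Σᵢ Aᵢ e^{−λτᵢ}`. -/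
def Amat (A0 : Matrix (Fin n) (Fin n) ℝ) (A : Fin m → Matrix (Fin n) (Fin n) ℝ)
    (τ : Fin m → ℝ) (lam : ℂ) : Matrix (Fin n) (Fin n) ℂ :=
  lam • (1 : Matrix (Fin n) (Fin n) ℂ) - A0.map Complex.ofReal
    - ∑ i : Fin m, Complex.exp (-lam * (τ i : ℂ)) • (A i).map Complex.ofReal

/-- The transfer function `G(λ) = C A(λ)⁻¹ B + D`. -/
def Gmat (A0 : Matrix (Fin n) (Fin n) ℝ) (A : Fin m → Matrix (Fin n) (Fin n) ℝ)
    (B : Matrix (Fin n) (Fin nu) ℝ) (C : Matrix (Fin ny) (Fin n) ℝ)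
    (D : Matrix (Fin ny) (Fin nu) ℝ) (τ : Fin m → ℝ) (lam : ℂ) :
    Matrix (Fin ny) (Fin nu) ℂ :=
  C.map Complex.ofReal * (Amat A0 A τ lam)⁻¹ * B.map Complex.ofReal + D.map Complex.ofReal

/-- `τ_max`, the maximum of the delays. -/
def tauMax [NeZero m] (τ : Fin m → ℝ) : ℝ :=
  Finset.univ.sup' Finset.univ_nonempty τ

/-- `λ` is an eigenvalue of the infinite-dimensional operator `L_ξ`: there is a continuously
differentiable, not identically zero function `u : [−τ_max, τ_max] → ℂ^{2n}` with
`u′(t) = λ u(t)` on the interval and `u′(0) = M₀ u(0) + Σᵢ (Mᵢ u(−τᵢ) + M₋ᵢ u(τᵢ))`. -/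
def IsEigLxi [NeZero m] (A0 : Matrix (Fin n) (Fin n) ℝ) (A : Fin m → Matrix (Fin n) (Fin n) ℝ)
    (B : Matrix (Fin n) (Fin nu) ℝ) (C : Matrix (Fin ny) (Fin n) ℝ)
    (D : Matrix (Fin ny) (Fin nu) ℝ) (τ : Fin m → ℝ) (ξ : ℝ) (lam : ℂ) : Prop :=
  ∃ u : ℝ → (Fin n ⊕ Fin n → ℂ),
    (∀ t ∈ Set.Icc (-(tauMax τ)) (tauMax τ),
      HasDerivWithinAt u (lam • u t) (Set.Icc (-(tauMax τ)) (tauMax τ)) t) ∧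
    (∃ t ∈ Set.Icc (-(tauMax τ)) (tauMax τ), u t ≠ 0) ∧
    lam • u 0 = (Mzero A0 B C D ξ).map Complex.ofReal *ᵥ u 0
      + ∑ i : Fin m, ((Mpos (A i)).map Complex.ofReal *ᵥ u (-(τ i))
          + (Mneg (A i)).map Complex.ofReal *ᵥ u (τ i))


/-
`H_ξ(λ)` has Hamiltonian structure: with the symplectic matrix `J = [[0, -1], [1, 0]]`, the
block `M₀` satisfies `J M₀ J = M₀ᵀ` (its off-diagonal blocks are symmetric and its diagonal
blocks are `X` and `-Xᵀ`), while `J M_{±i} J = M_{∓i}ᵀ` and `J² = -1`. Hence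
`J H_ξ(λ) J = H_ξ(-λ)ᵀ`, and taking determinants, using `det J ^ 2 = 1`, gives the claim.
-/

namespace Matrix

variable {l R : Type*} [DecidableEq l] [Fintype l] [CommRing R]

theorem J_mul_fromBlocks_mul_J (X Y Z W : Matrix l l R) :
    J l R * fromBlocks X Y Z W * J l R = fromBlocks (-W) Z Y (-X) := by
  simp [J, fromBlocks_multiply]

theorem J_mul_fromBlocks_mul_J_of_isSymm {X Y Z : Matrix l l R} (hY : Y.IsSymm)
    (hZ : Z.IsSymm) : J l R * fromBlocks X Y Z (-Xᵀ) * J l R = (fromBlocks X Y Z (-Xᵀ))ᵀ := by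
  rw [J_mul_fromBlocks_mul_J, fromBlocks_transpose, hY.eq, hZ.eq]
  simp

theorem J_mul_map_ofReal_mul_J (M : Matrix (l ⊕ l) (l ⊕ l) ℝ) :
    J l ℂ * M.map ofReal * J l ℂ = (J l ℝ * M * J l ℝ).map ofReal := by
  change J l ℂ * M.map ofRealHom * J l ℂ = (J l ℝ * M * J l ℝ).map ofRealHom
  rw [Matrix.map_mul, Matrix.map_mul, map_J]

end Matrix

theorem Dxi_isSymm (D : Matrix (Fin ny) (Fin nu) ℝ) (ξ : ℝ) : (Dxi D ξ).IsSymm := by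
  simp [Dxi, IsSymm, transpose_sub, transpose_smul]

theorem DxiT_isSymm (D : Matrix (Fin ny) (Fin nu) ℝ) (ξ : ℝ) : (DxiT D ξ).IsSymm := by
  simp [DxiT, IsSymm, transpose_sub, transpose_smul]

theorem J_mul_Mzero_mul_J (A0 : Matrix (Fin n) (Fin n) ℝ) (B : Matrix (Fin n) (Fin nu) ℝ)
    (C : Matrix (Fin ny) (Fin n) ℝ) (D : Matrix (Fin ny) (Fin nu) ℝ) (ξ : ℝ) :
    J (Fin n) ℝ * Mzero A0 B C D ξ * J (Fin n) ℝ = (Mzero A0 B C D ξ)ᵀ := by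
  have hinv := (Dxi_isSymm D ξ).inv
  have hdiag : -A0ᵀ + Cᵀ * D * (Dxi D ξ)⁻¹ * Bᵀ = -(A0 - B * (Dxi D ξ)⁻¹ * Dᵀ * C)ᵀ := by
    simp only [transpose_sub, transpose_mul, transpose_transpose, hinv.eq, Matrix.mul_assoc]
    abel
  rw [Mzero, hdiag]
  refine J_mul_fromBlocks_mul_J_of_isSymm ?_ ?_
  · simp [IsSymm, transpose_mul, hinv.eq, Matrix.mul_assoc]
  · simp [IsSymm, transpose_mul, (DxiT_isSymm D ξ).inv.eq, Matrix.mul_assoc]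

theorem J_mul_Mpos_mul_J (Ai : Matrix (Fin n) (Fin n) ℝ) :
    J (Fin n) ℝ * Mpos Ai * J (Fin n) ℝ = (Mneg Ai)ᵀ := by
  simp [Mpos, Mneg, J_mul_fromBlocks_mul_J, fromBlocks_transpose]

theorem J_mul_Mneg_mul_J (Ai : Matrix (Fin n) (Fin n) ℝ) :
    J (Fin n) ℝ * Mneg Ai * J (Fin n) ℝ = (Mpos Ai)ᵀ := by
  simp [Mpos, Mneg, J_mul_fromBlocks_mul_J, fromBlocks_transpose]

theorem J_mul_Hxi_mul_J (A0 : Matrix (Fin n) (Fin n) ℝ)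
    (A : Fin m → Matrix (Fin n) (Fin n) ℝ) (B : Matrix (Fin n) (Fin nu) ℝ)
    (C : Matrix (Fin ny) (Fin n) ℝ) (D : Matrix (Fin ny) (Fin nu) ℝ) (τ : Fin m → ℝ) (ξ : ℝ)
    (lam : ℂ) :
    J (Fin n) ℂ * Hxi A0 A B C D τ ξ lam * J (Fin n) ℂ = (Hxi A0 A B C D τ ξ (-lam))ᵀ := by
  simp only [Hxi, Matrix.mul_sub, Matrix.sub_mul, Matrix.mul_add, Matrix.add_mul,
    Finset.mul_sum, Finset.sum_mul, mul_smul_comm, smul_mul_assoc, Matrix.mul_one, J_squared,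
    J_mul_map_ofReal_mul_J, J_mul_Mzero_mul_J, J_mul_Mpos_mul_J, J_mul_Mneg_mul_J,
    transpose_sub, transpose_add, transpose_smul, transpose_one, transpose_sum, transpose_map,
    neg_neg, smul_neg]
  simp only [neg_smul, add_comm]

theorem det_Hxi_even_general
    (A0 : Matrix (Fin n) (Fin n) ℝ) (A : Fin m → Matrix (Fin n) (Fin n) ℝ)
    (B : Matrix (Fin n) (Fin nu) ℝ) (C : Matrix (Fin ny) (Fin n) ℝ)
    (D : Matrix (Fin ny) (Fin nu) ℝ) (τ : Fin m → ℝ)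
    (ξ : ℝ) :
    ∀ lam : ℂ, (Hxi A0 A B C D τ ξ (-lam)).det = (Hxi A0 A B C D τ ξ lam).det := by
  intro lam
  calc (Hxi A0 A B C D τ ξ (-lam)).det
      = (J (Fin n) ℂ * Hxi A0 A B C D τ ξ lam * J (Fin n) ℂ).det := by
        rw [J_mul_Hxi_mul_J, det_transpose]
    _ = (J (Fin n) ℂ).det * (J (Fin n) ℂ).det * (Hxi A0 A B C D τ ξ lam).det := by
        rw [det_mul, det_mul]; ring
    _ = (Hxi A0 A B C D τ ξ lam).det := by rw [J_det_mul_J_det, one_mul]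

/-- `h_ξ(λ) = det H_ξ(λ)` is an even function. -/
theorem det_Hxi_even [NeZero n] [NeZero nu] [NeZero ny] [NeZero m]
    (A0 : Matrix (Fin n) (Fin n) ℝ) (A : Fin m → Matrix (Fin n) (Fin n) ℝ)
    (B : Matrix (Fin n) (Fin nu) ℝ) (C : Matrix (Fin ny) (Fin n) ℝ)
    (D : Matrix (Fin ny) (Fin nu) ℝ) (τ : Fin m → ℝ)
    (ξ : ℝ) (hξ : 0 < ξ) (hD : IsUnit (Dxi D ξ)) :
    ∀ lam : ℂ, (Hxi A0 A B C D τ ξ (-lam)).det = (Hxi A0 A B C D τ ξ lam).det :=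
  det_Hxi_even_general A0 A B C D τ ξ
end
end

section
/- Let N be a positive integer and θ_{−N} < … < θ_{−1} < θ_0 = 0 < θ_1 < … < θ_N real mesh points satisfying the symmetry condition θ_{−i} = −θ_i for i = 1,…,N. Let λ ∈ ℂ and let p, q be complex polynomials of degree at most 2N with p(0) = q(0) = 1, p′(θ_i) = λ·p(θ_i) for all i ∈ {−N,…,N} \ {0}, and q′(θ_i) = (−λ)·q(θ_i) for all i ∈ {−N,…,N} \ {0}. Assume moreover uniqueness of the collocation solution in the sense that every complex polynomial r of degree at most 2N with r(0) = 0 and r′(θ_i) = (−λ)·r(θ_i) for all i ∈ {−N,…,N} \ {0} is the zero polynomial. Then q(t) = p(−t) for all t ∈ ℂ. -/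
open Polynomial

/-- on a symmetric mesh `θ_{-N} < … < θ_0 = 0 < … < θ_N` with
`θ_{-i} = -θ_i`, if `p` is a collocation polynomial for `z' = λz` and `q` one for
`z' = -λz` (both of degree `≤ 2N`, normalized by `p(0) = q(0) = 1`), and the collocation
solution for `-λ` is unique, then `q(t) = p(-t)`. -/
theorem collocation_polynomial_reflection (N : ℕ) (hN : 0 < N) (θ : ℤ → ℝ)
    (hmono : ∀ i j : ℤ, -(N : ℤ) ≤ i → i < j → j ≤ (N : ℤ) → θ i < θ j)
    (hθ0 : θ 0 = 0)
    (hsym : ∀ i : ℤ, 1 ≤ i → i ≤ (N : ℤ) → θ (-i) = -θ i)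
    (lam : ℂ) (p q : Polynomial ℂ)
    (hpdeg : p.degree ≤ (2 * N : ℕ)) (hqdeg : q.degree ≤ (2 * N : ℕ))
    (hp0 : p.eval 0 = 1) (hq0 : q.eval 0 = 1)
    (hp : ∀ i : ℤ, i ≠ 0 → |i| ≤ (N : ℤ) →
      (Polynomial.derivative p).eval ((θ i : ℝ) : ℂ) = lam * p.eval ((θ i : ℝ) : ℂ))
    (hq : ∀ i : ℤ, i ≠ 0 → |i| ≤ (N : ℤ) →
      (Polynomial.derivative q).eval ((θ i : ℝ) : ℂ) = (-lam) * q.eval ((θ i : ℝ) : ℂ))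
    (huniq : ∀ r : Polynomial ℂ, r.degree ≤ (2 * N : ℕ) → r.eval 0 = 0 →
      (∀ i : ℤ, i ≠ 0 → |i| ≤ (N : ℤ) →
        (Polynomial.derivative r).eval ((θ i : ℝ) : ℂ) = (-lam) * r.eval ((θ i : ℝ) : ℂ)) →
      r = 0) :
    ∀ t : ℂ, q.eval t = p.eval (-t) := by
  -- reflected polynomial p̃(t) = p(-t)
  set pt : Polynomial ℂ := p.comp (-X) with hpt
  have hev : ∀ t : ℂ, pt.eval t = p.eval (-t) := by
    intro t; simp [hpt]
  have hder : derivative pt = -((derivative p).comp (-X)) := by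
    simp [hpt, derivative_comp]
  have hptdeg : pt.degree ≤ (2 * N : ℕ) := by
    rw [← natDegree_le_iff_degree_le]
    have : pt.natDegree = p.natDegree := by
      simp [hpt, natDegree_comp]
    rw [this, natDegree_le_iff_degree_le]
    exact hpdeg
  -- the reflection of the mesh point
  have hrefl : ∀ i : ℤ, i ≠ 0 → |i| ≤ (N : ℤ) → -(θ i : ℝ) = θ (-i) := by
    intro i hi0 hiN
    rcases lt_or_gt_of_ne hi0 with h | h
    · have h1 : 1 ≤ -i := by omega
      have h2 : -i ≤ (N : ℤ) := by
        have := abs_le.mp hiN; omega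
      have := hsym (-i) h1 h2
      simp only [neg_neg] at this
      linarith
    · have h2 : i ≤ (N : ℤ) := by have := abs_le.mp hiN; omega
      have := hsym i h h2
      linarith
  -- p̃ satisfies the collocation conditions for -lam
  have hptcol : ∀ i : ℤ, i ≠ 0 → |i| ≤ (N : ℤ) →
      (derivative pt).eval ((θ i : ℝ) : ℂ) = (-lam) * pt.eval ((θ i : ℝ) : ℂ) := by
    intro i hi0 hiN
    have hni0 : -i ≠ 0 := by omega
    have hniN : |(-i)| ≤ (N : ℤ) := by rwa [abs_neg]
    have key := hp (-i) hni0 hniN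
    have hrw : ((θ (-i) : ℝ) : ℂ) = -((θ i : ℝ) : ℂ) := by
      rw [← hrefl i hi0 hiN]; push_cast; ring
    rw [hrw] at key
    rw [hder]
    simp only [eval_neg, eval_comp, eval_neg, eval_X, hev]
    rw [key]; ring
  -- apply uniqueness to q - p̃
  have hr := huniq (q - pt) ?_ ?_ ?_
  · intro t
    have : q.eval t - pt.eval t = 0 := by
      have := congrArg (fun r => Polynomial.eval t r) hr
      simpa using this
    have := hev t
    linear_combination ‹q.eval t - pt.eval t = 0› + this
  · exact le_trans (degree_sub_le _ _) (max_le hqdeg hptdeg)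
  · have : pt.eval 0 = 1 := by rw [hev]; simpa using hp0
    simp [hq0, this]
  · intro i hi0 hiN
    rw [map_sub, eval_sub, eval_sub, hq i hi0 hiN, hptcol i hi0 hiN]
    ring
end

section
/- Let ξ > 0 be such that D_ξ := DᵀD − ξ²I is invertible. Let a_1,…,a_m and b_1,…,b_m be functions ℂ → ℂ satisfying a_i(−conj(λ)) = conj(b_i(λ)) for all λ ∈ ℂ and all i = 1,…,m. Define Ĥ_ξ(λ) := λI − M_0 − Σ_{i=1}^m (M_i a_i(λ) + M_{−i} b_i(λ)) ∈ ℂ^{2n×2n}. Then for all λ ∈ ℂ, det Ĥ_ξ(−conj(λ)) = conj(det Ĥ_ξ(λ)); in particular, λ satisfies det Ĥ_ξ(λ) = 0 if and only if −conj(λ) satisfies det Ĥ_ξ(−conj(λ)) = 0. -/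
open Matrix Complex

noncomputable section

variable {n nu ny m : ℕ}

/-- `Ĥ_ξ(λ) = λI − M₀ − Σᵢ (Mᵢ aᵢ(λ) + M₋ᵢ bᵢ(λ))`. -/
def HhatFun (A0 : Matrix (Fin n) (Fin n) ℝ) (A : Fin m → Matrix (Fin n) (Fin n) ℝ)
    (B : Matrix (Fin n) (Fin nu) ℝ) (C : Matrix (Fin ny) (Fin n) ℝ)
    (D : Matrix (Fin ny) (Fin nu) ℝ) (ξ : ℝ) (a b : Fin m → ℂ → ℂ) (lam : ℂ) :
    Matrix (Fin n ⊕ Fin n) (Fin n ⊕ Fin n) ℂ :=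
  lam • (1 : Matrix (Fin n ⊕ Fin n) (Fin n ⊕ Fin n) ℂ)
    - (Mzero A0 B C D ξ).map Complex.ofReal
    - ∑ i : Fin m, (a i lam • (Mpos (A i)).map Complex.ofReal
        + b i lam • (Mneg (A i)).map Complex.ofReal)


section AuxHam

variable {n nu ny m : ℕ}

lemma dxi_inv_transpose (D : Matrix (Fin ny) (Fin nu) ℝ) (ξ : ℝ) :
    ((Dxi D ξ)⁻¹)ᵀ = (Dxi D ξ)⁻¹ := by
  rw [Matrix.transpose_nonsing_inv]
  congr 1
  simp [Dxi, Matrix.transpose_sub, Matrix.transpose_mul, Matrix.transpose_smul]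

lemma dxiT_inv_transpose (D : Matrix (Fin ny) (Fin nu) ℝ) (ξ : ℝ) :
    ((DxiT D ξ)⁻¹)ᵀ = (DxiT D ξ)⁻¹ := by
  rw [Matrix.transpose_nonsing_inv]
  congr 1
  simp [DxiT, Matrix.transpose_sub, Matrix.transpose_mul, Matrix.transpose_smul]

/-- The symplectic-type matrix `J` over ℝ. -/
def Jr (n : ℕ) : Matrix (Fin n ⊕ Fin n) (Fin n ⊕ Fin n) ℝ :=
  fromBlocks 0 1 (-1) 0

lemma Jr_mul_Mzero (A0 : Matrix (Fin n) (Fin n) ℝ) (B : Matrix (Fin n) (Fin nu) ℝ)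
    (C : Matrix (Fin ny) (Fin n) ℝ) (D : Matrix (Fin ny) (Fin nu) ℝ) (ξ : ℝ) :
    Jr n * Mzero A0 B C D ξ = -(Mzero A0 B C D ξ)ᵀ * Jr n := by
  rw [Mzero, Jr, fromBlocks_transpose, fromBlocks_neg, fromBlocks_multiply, fromBlocks_multiply]
  rw [Matrix.fromBlocks_inj]
  refine ⟨?_, ?_, ?_, ?_⟩
  · simp [Matrix.transpose_smul, Matrix.transpose_mul, dxiT_inv_transpose, Matrix.mul_assoc]
  · simp [Matrix.transpose_sub, Matrix.transpose_mul, dxi_inv_transpose, Matrix.mul_assoc]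
    abel
  · simp [Matrix.transpose_add, Matrix.transpose_neg, Matrix.transpose_mul, dxi_inv_transpose,
      Matrix.mul_assoc]
    abel
  · simp [Matrix.transpose_neg, Matrix.transpose_mul, dxi_inv_transpose, Matrix.mul_assoc]

lemma Jr_mul_Mpos (Ai : Matrix (Fin n) (Fin n) ℝ) :
    Jr n * Mpos Ai = -(Mneg Ai)ᵀ * Jr n := by
  simp [Jr, Mpos, Mneg, fromBlocks_transpose, fromBlocks_neg, fromBlocks_multiply]

lemma Jr_mul_Mneg (Ai : Matrix (Fin n) (Fin n) ℝ) :
    Jr n * Mneg Ai = -(Mpos Ai)ᵀ * Jr n := by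
  simp [Jr, Mpos, Mneg, fromBlocks_transpose, fromBlocks_neg, fromBlocks_multiply]

/-- The symplectic-type matrix `J` over ℂ. -/
def Jc (n : ℕ) : Matrix (Fin n ⊕ Fin n) (Fin n ⊕ Fin n) ℂ :=
  fromBlocks 0 1 (-1) 0

lemma Jr_map : (Jr n).map Complex.ofReal = Jc n := by
  ext i j
  cases i <;> cases j <;>
    simp [Jr, Jc, fromBlocks, Matrix.one_apply, apply_ite]

lemma map_ofReal_mul (M N : Matrix (Fin n ⊕ Fin n) (Fin n ⊕ Fin n) ℝ) :
    (M * N).map Complex.ofReal = M.map Complex.ofReal * N.map Complex.ofReal := by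
  ext i j
  simp [Matrix.mul_apply]

lemma Jc_mul_map (M N : Matrix (Fin n ⊕ Fin n) (Fin n ⊕ Fin n) ℝ)
    (h : Jr n * M = -Nᵀ * Jr n) :
    Jc n * M.map Complex.ofReal = -(N.map Complex.ofReal)ᵀ * Jc n := by
  have h2 : (-Nᵀ).map Complex.ofReal = -(N.map Complex.ofReal)ᵀ := by
    ext i j
    simp
  have := congrArg (fun X => X.map Complex.ofReal) h
  simp only [map_ofReal_mul, h2, Jr_map] at this
  exact this

lemma Jc_mul_Jc : Jc n * Jc n = -1 := by
  rw [Jc, fromBlocks_multiply, ← fromBlocks_one, fromBlocks_neg]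
  rw [Matrix.fromBlocks_inj]
  refine ⟨by simp, by simp, by simp, by simp⟩

lemma map_conj_Hhat (A0 : Matrix (Fin n) (Fin n) ℝ) (A : Fin m → Matrix (Fin n) (Fin n) ℝ)
    (B : Matrix (Fin n) (Fin nu) ℝ) (C : Matrix (Fin ny) (Fin n) ℝ)
    (D : Matrix (Fin ny) (Fin nu) ℝ) (ξ : ℝ) (a b : Fin m → ℂ → ℂ) (lam : ℂ) :
    (HhatFun A0 A B C D ξ a b lam).map (starRingEnd ℂ)
      = (starRingEnd ℂ) lam • (1 : Matrix (Fin n ⊕ Fin n) (Fin n ⊕ Fin n) ℂ)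
        - (Mzero A0 B C D ξ).map Complex.ofReal
        - ∑ i : Fin m, ((starRingEnd ℂ) (a i lam) • (Mpos (A i)).map Complex.ofReal
            + (starRingEnd ℂ) (b i lam) • (Mneg (A i)).map Complex.ofReal) := by
  ext i j
  simp only [HhatFun, Matrix.map_apply, Matrix.sub_apply, Matrix.smul_apply, Matrix.sum_apply,
    Matrix.add_apply, map_sub, map_sum, map_add, _root_.map_mul, smul_eq_mul]
  simp [Matrix.one_apply, apply_ite (starRingEnd ℂ), Complex.conj_ofReal]

lemma key_Hhat (A0 : Matrix (Fin n) (Fin n) ℝ) (A : Fin m → Matrix (Fin n) (Fin n) ℝ)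
    (B : Matrix (Fin n) (Fin nu) ℝ) (C : Matrix (Fin ny) (Fin n) ℝ)
    (D : Matrix (Fin ny) (Fin nu) ℝ) (ξ : ℝ) (a b : Fin m → ℂ → ℂ)
    (hab : ∀ (i : Fin m) (lam : ℂ), a i (-(starRingEnd ℂ) lam) = (starRingEnd ℂ) (b i lam))
    (lam : ℂ) :
    Jc n * HhatFun A0 A B C D ξ a b (-(starRingEnd ℂ) lam)
      = -(((HhatFun A0 A B C D ξ a b lam).map (starRingEnd ℂ))ᵀ) * Jc n := by
  have hb' : ∀ i : Fin m, b i (-(starRingEnd ℂ) lam) = (starRingEnd ℂ) (a i lam) := by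
    intro i
    have h2 := hab i (-(starRingEnd ℂ) lam)
    simp only [map_neg, Complex.conj_conj, neg_neg] at h2
    have := congrArg (starRingEnd ℂ) h2
    simpa using this.symm
  rw [map_conj_Hhat]
  rw [HhatFun]
  simp only [Matrix.transpose_sub, Matrix.transpose_smul, Matrix.transpose_one,
    Matrix.transpose_sum, Matrix.transpose_add]
  rw [mul_sub, mul_sub, Finset.mul_sum]
  rw [Jc_mul_map _ _ (Jr_mul_Mzero A0 B C D ξ)]
  have hsum : ∀ i : Fin m,
      Jc n * (a i (-(starRingEnd ℂ) lam) • (Mpos (A i)).map Complex.ofReal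
          + b i (-(starRingEnd ℂ) lam) • (Mneg (A i)).map Complex.ofReal)
        = -((starRingEnd ℂ) (a i lam) • (((Mpos (A i)).map Complex.ofReal)ᵀ * Jc n))
          + -((starRingEnd ℂ) (b i lam) • (((Mneg (A i)).map Complex.ofReal)ᵀ * Jc n)) := by
    intro i
    rw [mul_add, Matrix.mul_smul, Matrix.mul_smul,
      Jc_mul_map _ _ (Jr_mul_Mpos (A i)), Jc_mul_map _ _ (Jr_mul_Mneg (A i)),
      hab i lam, hb' i]
    simp only [Matrix.neg_mul, smul_neg]
    abel
  rw [Finset.sum_congr rfl fun i _ => hsum i]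
  simp only [Matrix.neg_mul, Matrix.mul_neg, Matrix.sub_mul, Matrix.add_mul, Matrix.smul_mul,
    Matrix.mul_smul, Matrix.mul_one, Matrix.one_mul, Finset.sum_mul, smul_neg, neg_smul,
    Finset.sum_add_distrib, Finset.sum_neg_distrib, neg_neg, neg_sub]
  abel

end AuxHam

/-- if `aᵢ(−conj λ) = conj (bᵢ(λ))` for all `i`, `λ`, then
`det Ĥ_ξ(−conj λ) = conj (det Ĥ_ξ(λ))`; in particular `det Ĥ_ξ(λ) = 0` iff
`det Ĥ_ξ(−conj λ) = 0`. -/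
theorem det_Hhat_neg_conj [NeZero n] [NeZero nu] [NeZero ny] [NeZero m]
    (A0 : Matrix (Fin n) (Fin n) ℝ) (A : Fin m → Matrix (Fin n) (Fin n) ℝ)
    (B : Matrix (Fin n) (Fin nu) ℝ) (C : Matrix (Fin ny) (Fin n) ℝ)
    (D : Matrix (Fin ny) (Fin nu) ℝ) (τ : Fin m → ℝ)
    (ξ : ℝ) (hξ : 0 < ξ) (hD : IsUnit (Dxi D ξ)) (a b : Fin m → ℂ → ℂ)
    (hab : ∀ (i : Fin m) (lam : ℂ), a i (-(starRingEnd ℂ) lam) = (starRingEnd ℂ) (b i lam)) :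
    ∀ lam : ℂ,
      (HhatFun A0 A B C D ξ a b (-(starRingEnd ℂ) lam)).det
          = (starRingEnd ℂ) ((HhatFun A0 A B C D ξ a b lam).det) ∧
        ((HhatFun A0 A B C D ξ a b lam).det = 0
          ↔ (HhatFun A0 A B C D ξ a b (-(starRingEnd ℂ) lam)).det = 0) := by
  intro lam
  -- determinant of Jc squares to 1
  have hcard : Fintype.card (Fin n ⊕ Fin n) = n + n := by
    simp [Fintype.card_sum]
  have hJ2 : (Jc n).det * (Jc n).det = 1 := by
    rw [← Matrix.det_mul, Jc_mul_Jc, Matrix.det_neg, Matrix.det_one, hcard, mul_one]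
    exact Even.neg_one_pow ⟨n, rfl⟩
  have hJne : (Jc n).det ≠ 0 := by
    intro h
    rw [h, zero_mul] at hJ2
    exact zero_ne_one hJ2
  have key := key_Hhat A0 A B C D ξ a b hab lam
  have hdet : (Jc n).det * (HhatFun A0 A B C D ξ a b (-(starRingEnd ℂ) lam)).det
      = (-(((HhatFun A0 A B C D ξ a b lam).map (starRingEnd ℂ))ᵀ)).det * (Jc n).det := by
    rw [← Matrix.det_mul, ← Matrix.det_mul, key]
  have hdetneg : (-(((HhatFun A0 A B C D ξ a b lam).map (starRingEnd ℂ))ᵀ)).det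
      = (starRingEnd ℂ) ((HhatFun A0 A B C D ξ a b lam).det) := by
    rw [Matrix.det_neg, Matrix.det_transpose, hcard]
    rw [Even.neg_one_pow ⟨n, rfl⟩, one_mul]
    rw [RingHom.map_det]
    rfl
  have hmain : (HhatFun A0 A B C D ξ a b (-(starRingEnd ℂ) lam)).det
      = (starRingEnd ℂ) ((HhatFun A0 A B C D ξ a b lam).det) := by
    apply mul_left_cancel₀ hJne
    rw [hdet, hdetneg, mul_comm]
  refine ⟨hmain, ?_⟩
  rw [hmain]
  constructor
  · intro h
    rw [h, map_zero]
  · intro h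
    have := congrArg (starRingEnd ℂ) h
    simpa using this
end
end
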